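/- Every factor of w of length 3 is a factor of the word u₁ = 11421231211231411; moreover w has exactly 13 distinct factors of length 3. -/

import Mathlib

/-- The four-letter alphabet `A₄ = {1,2,3,4}`; the value `k : Fin 4` represents letter `k+1`. -/
abbrev A4 := Fin 4

/-- The morphism `f` on letters: `f(1)=121, f(2)=123, f(3)=141, f(4)=142`
(letters `1,2,3,4` encoded as `0,1,2,3`). -/
def fm : A4 → List A4
  | 0 => [0, 1, 0]
  | 1 => [0, 1, 2]
  | 2 => [0, 3, 0]
  | 3 => [0, 3, 1]

/-- The morphism `f` extended to words by concatenation. -/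
def fw (u : List A4) : List A4 := u.flatMap fm

/-- The fixed point `w` of `f` starting with the letter `1`: since `|f^k(1)| = 3^k` and each
`f^k(1)` is a prefix of `f^(k+1)(1)`, the `n`-th letter of `w` is the `n`-th letter of
`f^(n+1)(1)`. -/
def w (n : ℕ) : A4 := ((fw^[n + 1]) [0]).getD n 0

/-- The finite word `t` occurs at position `i` in the infinite word `x`. -/
def OccursAt {α : Type*} (t : List α) (x : ℕ → α) (i : ℕ) : Prop :=
  t = (List.range t.length).map fun k => x (i + k)

/-- The finite word `v` is a factor of the infinite word `x`. -/
def FactorOf {α : Type*} (v : List α) (x : ℕ → α) : Prop :=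
  ∃ i, OccursAt v x i

/-- The finite word `v` has period `q ≥ 1`: `v(j) = v(j+q)` whenever `0 ≤ j < |v| - q`. -/
def HasPeriod {α : Type*} (v : List α) (q : ℕ) : Prop :=
  1 ≤ q ∧ ∀ j, j + q < v.length → v[j]? = v[j + q]?

/-- A word lies in `ker ψ` if each letter of `A₄` occurs in it a number of times
divisible by `4`. -/
def InKerPsi (u : List A4) : Prop := ∀ a : A4, 4 ∣ u.count a

/-- `q` is a kernel period of `v`: `1 ≤ q ≤ |v|`, `v` has period `q`, and the prefix of `v`
of length `q` lies in `ker ψ`. -/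
def KernelPeriod (v : List A4) (q : ℕ) : Prop :=
  q ≤ v.length ∧ HasPeriod v q ∧ InKerPsi (v.take q)


/-!
Since `w = f(w)` and every image `f(a)` has length 3, the factor of `w` at position `3n + k`
(`k < 3`) is a factor of `f(w n) f(w (n+1))`. Of the 16 conceivable pairs `w n, w (n+1)`, only
`4` followed by `3` or `4` would create a factor not in `u₁` (namely `214`), and a `4` occurs only
as the middle letter of `f(3) = 141` or `f(4) = 142`, hence is followed by `1` or `2`. Conversely,
all 13 factors already occur in the prefix `f⁴(1)` of length 81.
-/

lemma length_fm (a : A4) : (fm a).length = 3 := by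
  fin_cases a <;> rfl

lemma length_fw (u : List A4) : (fw u).length = 3 * u.length := by
  simp [fw, List.length_flatMap, length_fm, mul_comm]

lemma getD_fw (u : List A4) {n k : ℕ} (hn : n < u.length) (hk : k < 3) :
    (fw u).getD (3 * n + k) 0 = (fm (u.getD n 0)).getD k 0 := by
  induction u generalizing n with
  | nil => simp at hn
  | cons a u ih =>
    cases n with
    | zero =>
      simp only [fw, List.flatMap_cons, mul_zero, zero_add, List.getD_cons_zero]
      exact List.getD_append _ _ _ _ (by rwa [length_fm])
    | succ n =>
      have hshift : 3 * (n + 1) + k = (fm a).length + (3 * n + k) := by rw [length_fm]; ring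
      simp only [fw, List.flatMap_cons] at ih ⊢
      rw [hshift, List.getD_append_right _ _ _ _ (Nat.le_add_right _ _), Nat.add_sub_cancel_left]
      exact ih (by simpa using hn)

lemma length_iterate_fw (m : ℕ) : ((fw^[m]) [0]).length = 3 ^ m := by
  induction m with
  | zero => rfl
  | succ m ih => rw [Function.iterate_succ_apply', length_fw, ih, pow_succ, mul_comm]

lemma iterate_fw_prefix_succ (m : ℕ) : (fw^[m]) [0] <+: (fw^[m + 1]) [0] := by
  induction m with
  | zero => exact ⟨[1, 0], rfl⟩
  | succ m ih =>
    rw [Function.iterate_succ_apply' _ m, Function.iterate_succ_apply' _ (m + 1)]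
    exact ih.flatMap fm

lemma iterate_fw_prefix_of_le {m m' : ℕ} (h : m ≤ m') : (fw^[m]) [0] <+: (fw^[m']) [0] := by
  induction m', h using Nat.le_induction with
  | base => exact List.prefix_refl _
  | succ m' _ ih => exact ih.trans (iterate_fw_prefix_succ m')

lemma w_eq_getD_iterate_fw {m n : ℕ} (h : n < 3 ^ m) : w n = ((fw^[m]) [0]).getD n 0 := by
  have getD_eq {m m' : ℕ} (hle : m ≤ m') (hn : n < 3 ^ m) :
      ((fw^[m]) [0]).getD n 0 = ((fw^[m']) [0]).getD n 0 := by
    obtain ⟨t, ht⟩ := iterate_fw_prefix_of_le hle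
    rw [← ht, List.getD_append _ _ _ _ (by rwa [length_iterate_fw])]
  rcases Nat.le_total (n + 1) m with hle | hle
  · exact getD_eq hle (Nat.lt_pow_self (n := n + 1) (by norm_num) |>.trans' n.lt_succ_self)
  · exact (getD_eq hle h).symm

lemma w_three_mul_add (n : ℕ) {k : ℕ} (hk : k < 3) : w (3 * n + k) = (fm (w n)).getD k 0 := by
  have hn : n < 3 ^ (n + 1) := (Nat.lt_pow_self (by norm_num)).trans' n.lt_succ_self
  rw [w_eq_getD_iterate_fw (m := n + 2) (by rw [pow_succ]; omega), Function.iterate_succ_apply',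
    getD_fw _ (by rwa [length_iterate_fw]) hk, ← w_eq_getD_iterate_fw hn]

lemma iterate_fw_eq_map_w (m : ℕ) : (fw^[m]) [0] = (List.range (3 ^ m)).map w := by
  apply List.ext_getElem (by simp [length_iterate_fw])
  intro n hn _
  rw [List.getElem_map, List.getElem_range, w_eq_getD_iterate_fw (by rwa [length_iterate_fw] at hn),
    List.getD_eq_getElem]

lemma w_three_mul_add_of_lt_six (n : ℕ) {l : ℕ} (hl : l < 6) :
    w (3 * n + l) = (fm (w n) ++ fm (w (n + 1))).getD l 0 := by
  rcases Nat.lt_or_ge l 3 with hl3 | hl3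
  · rw [w_three_mul_add n hl3, List.getD_append _ _ _ _ (by rwa [length_fm])]
  · obtain ⟨k, rfl⟩ := Nat.exists_eq_add_of_le hl3
    rw [show 3 * n + (3 + k) = 3 * (n + 1) + k by ring, w_three_mul_add _ (by omega),
      List.getD_append_right _ _ _ _ (by rw [length_fm]; omega), length_fm, Nat.add_sub_cancel_left]

lemma w_succ_eq_zero_or_one_of_eq_three {m : ℕ} (h : w m = 3) :
    w (m + 1) = 0 ∨ w (m + 1) = 1 := by
  obtain ⟨n, k, hk, rfl⟩ : ∃ n k, k < 3 ∧ m = 3 * n + k :=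
    ⟨m / 3, m % 3, m.mod_lt (by norm_num), (m.div_add_mod 3).symm⟩
  rw [w_three_mul_add_of_lt_six n (by omega)] at h
  rw [add_assoc, w_three_mul_add_of_lt_six n (by omega)]
  generalize w n = a, w (n + 1) = b at h ⊢
  revert k
  revert a b
  decide

def factors3 : List (List A4) :=
  [[0, 0, 1], [0, 0, 3], [0, 1, 0], [0, 1, 2], [0, 3, 0], [0, 3, 1], [1, 0, 0], [1, 0, 1],
   [1, 2, 0], [2, 0, 1], [2, 0, 3], [3, 0, 0], [3, 1, 0]]

lemma window_mem_factors3 (i : ℕ) : [w i, w (i + 1), w (i + 2)] ∈ factors3 := by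
  obtain ⟨n, k, hk, rfl⟩ : ∃ n k, k < 3 ∧ i = 3 * n + k :=
    ⟨i / 3, i % 3, i.mod_lt (by norm_num), (i.div_add_mod 3).symm⟩
  have hpair := @w_succ_eq_zero_or_one_of_eq_three n
  rw [add_assoc, add_assoc, w_three_mul_add_of_lt_six n (l := k) (by omega),
    w_three_mul_add_of_lt_six n (l := k + 1) (by omega),
    w_three_mul_add_of_lt_six n (l := k + 2) (by omega)]
  generalize w n = a, w (n + 1) = b at hpair ⊢
  revert k
  revert a b
  decide

lemma occursAt_iff_of_length_eq_three {α : Type*} {v : List α} {x : ℕ → α} {i : ℕ}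
    (hv : v.length = 3) : OccursAt v x i ↔ v = [x i, x (i + 1), x (i + 2)] := by
  simp [OccursAt, hv, List.range_succ]

lemma FactorOf.of_infix_map_range {α : Type*} {v : List α} {x : ℕ → α} {N : ℕ}
    (h : v <:+: (List.range N).map x) : FactorOf v x := by
  obtain ⟨k, hlen, hget⟩ := List.infix_iff_getElem?.mp h
  refine ⟨k, List.ext_getElem (by simp) fun i hi _ => ?_⟩
  have := hget i hi
  simp only [List.length_map, List.length_range] at hlen
  simp only [List.getElem?_map, List.getElem?_range (show i + k < N by omega),
    Option.map_some, Option.some.injEq] at this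
  simp [← this, add_comm]

lemma factorOf_w_of_mem_factors3 {v : List A4} (hv : v ∈ factors3) : FactorOf v w := by
  have hinfix : ∀ v ∈ factors3, v <:+: (fw^[4]) [0] := by decide
  exact .of_infix_map_range (iterate_fw_eq_map_w 4 ▸ hinfix v hv)

lemma factorOf_w_and_length_eq_three_iff {v : List A4} :
    FactorOf v w ∧ v.length = 3 ↔ v ∈ factors3 := by
  constructor
  · rintro ⟨⟨i, hocc⟩, hlen⟩
    rw [occursAt_iff_of_length_eq_three hlen] at hocc
    exact hocc ▸ window_mem_factors3 i
  · intro hv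
    refine ⟨factorOf_w_of_mem_factors3 hv, ?_⟩
    revert v
    decide

/-- Every factor of `w` of length 3 is a factor of `u₁ = 11421231211231411` (encoded with
letters `1,2,3,4` as `0,1,2,3`), and `w` has exactly 13 distinct factors of length 3. -/
theorem stmt14 :
    (∀ v : List A4, FactorOf v w → v.length = 3 →
      v <:+: ([0, 0, 3, 1, 0, 1, 2, 0, 1, 0, 0, 1, 2, 0, 3, 0, 0] : List A4)) ∧
    {v : List A4 | FactorOf v w ∧ v.length = 3}.ncard = 13 := by
  refine ⟨fun v hv hlen => ?_, ?_⟩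
  · have hmem : v ∈ factors3 := factorOf_w_and_length_eq_three_iff.mp ⟨hv, hlen⟩
    clear hv hlen
    revert v
    decide
  · have hset : {v : List A4 | FactorOf v w ∧ v.length = 3} = factors3.toFinset := by
      ext v
      simp [factorOf_w_and_length_eq_three_iff]
    rw [hset, Set.ncard_coe_finset]
    decide
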